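/- arXiv:2112.03996 — 2 statements merged into one kernel-verified Lean document; each statement's English description precedes it below -/
import Mathlib

section
/- Let Ω = {(x', x_n) : x_n > ρ(x')} with ρ : ℝ^{n−1} → ℝ Lipschitz with constant M = ‖∇ρ‖_∞, and define the fold map L : ℝⁿ → cl(Ω) by L(x) = x if x ∈ Ω and L(x) = (x', 2ρ(x') − x_n) otherwise. Then for every x ∈ ℝⁿ and y ∈ Ω, |L(x) − y| ≤ (M + √(1+M²))² · |x − y|. -/
/-- The first `m` coordinates of a point of `ℝ^{m+1}`. -/
noncomputable def initCoord (m : ℕ) (x : EuclideanSpace ℝ (Fin (m + 1))) :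
    EuclideanSpace ℝ (Fin m) :=
  WithLp.toLp 2 (fun i => x i.castSucc)

/-- The last coordinate of a point of `ℝ^{m+1}`. -/
noncomputable def lastCoord (m : ℕ) (x : EuclideanSpace ℝ (Fin (m + 1))) : ℝ :=
  x (Fin.last m)

/-- The fold map of the special Lipschitz domain `Ω = {xₙ > ρ(x')}`: the identity on `Ω`,
and the reflection `(x', xₙ) ↦ (x', 2ρ(x') − xₙ)` off `Ω`. -/
noncomputable def foldMap (m : ℕ) (ρ : EuclideanSpace ℝ (Fin m) → ℝ)
    (x : EuclideanSpace ℝ (Fin (m + 1))) : EuclideanSpace ℝ (Fin (m + 1)) :=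
  if ρ (initCoord m x) < lastCoord m x then x
  else WithLp.toLp 2 (Fin.snoc (initCoord m x).ofLp (2 * ρ (initCoord m x) - lastCoord m x))

/-!
Write `a = |x' − y'|`, `s = xₙ − yₙ` and `t = 2ρ(x') − xₙ − yₙ` for the last coordinate of
`L(x) − y` when `x ∉ Ω`. Then `s ≤ t` because `xₙ ≤ ρ(x')`, and `t ≤ 2Ma − s` because
`ρ(x') ≤ ρ(y') + Ma < yₙ + Ma`. So `|t| ≤ max(|s|, |2Ma − s|)`, and the shear
`(a, s) ↦ (a, 2Ma − s)` has operator norm `M + √(1+M²)`, which gives the estimate with constant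
`M + √(1+M²) ≤ (M + √(1+M²))²`.
-/

section Coordinates

variable {m : ℕ}

lemma norm_sq_eq_norm_initCoord_sq_add_lastCoord_sq (z : EuclideanSpace ℝ (Fin (m + 1))) :
    ‖z‖ ^ 2 = ‖initCoord m z‖ ^ 2 + lastCoord m z ^ 2 := by
  rw [EuclideanSpace.norm_eq, EuclideanSpace.norm_eq, Real.sq_sqrt (by positivity),
    Real.sq_sqrt (by positivity), Fin.sum_univ_castSucc]
  simp [initCoord, lastCoord, sq_abs]

lemma initCoord_sub (x y : EuclideanSpace ℝ (Fin (m + 1))) :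
    initCoord m (x - y) = initCoord m x - initCoord m y := by
  ext i
  simp [initCoord]

lemma lastCoord_sub (x y : EuclideanSpace ℝ (Fin (m + 1))) :
    lastCoord m (x - y) = lastCoord m x - lastCoord m y := by
  simp [lastCoord]

variable (ρ : EuclideanSpace ℝ (Fin m) → ℝ)

lemma initCoord_foldMap (x : EuclideanSpace ℝ (Fin (m + 1))) :
    initCoord m (foldMap m ρ x) = initCoord m x := by
  unfold foldMap
  split_ifs
  · rfl
  · ext i
    simp [initCoord, Fin.snoc_castSucc]

lemma lastCoord_foldMap_of_le {x : EuclideanSpace ℝ (Fin (m + 1))}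
    (hx : lastCoord m x ≤ ρ (initCoord m x)) :
    lastCoord m (foldMap m ρ x) = 2 * ρ (initCoord m x) - lastCoord m x := by
  rw [foldMap, if_neg (not_lt.2 hx)]
  simp [lastCoord]

end Coordinates

lemma one_le_add_sqrt_one_add_sq {M : ℝ} (hM : 0 ≤ M) : 1 ≤ M + √(1 + M ^ 2) := by
  have : 1 ≤ √(1 + M ^ 2) := Real.one_le_sqrt.2 (by nlinarith)
  linarith

/-- The shear `(a, s) ↦ (a, 2Ma − s)` has operator norm `M + √(1+M²)`. -/
lemma sq_add_shear_sq_le {M : ℝ} (hM : 0 ≤ M) (a s : ℝ) :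
    a ^ 2 + (2 * M * a - s) ^ 2 ≤ (M + √(1 + M ^ 2)) ^ 2 * (a ^ 2 + s ^ 2) := by
  set r := √(1 + M ^ 2)
  have hr : r ^ 2 = 1 + M ^ 2 := Real.sq_sqrt (by positivity)
  have hrM : 0 ≤ r + M := by positivity
  -- `(r − M)(r + M) = 1` turns the gap into a multiple of a square.
  have gap : (M + r) ^ 2 * (a ^ 2 + s ^ 2) - (a ^ 2 + (2 * M * a - s) ^ 2)
      = 2 * M * (r + M) * ((r - M) * a + s) ^ 2 := by
    linear_combination (a ^ 2 + s ^ 2 - 2 * M * (r - M) * a ^ 2 - 4 * M * a * s) * hr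
  nlinarith [mul_nonneg (mul_nonneg (mul_nonneg zero_le_two hM) hrM) (sq_nonneg ((r - M) * a + s))]

lemma sq_add_sq_le_of_le_of_le_shear {M a s t : ℝ} (hM : 0 ≤ M) (hst : s ≤ t)
    (hts : t ≤ 2 * M * a - s) :
    a ^ 2 + t ^ 2 ≤ (M + √(1 + M ^ 2)) ^ 2 * (a ^ 2 + s ^ 2) := by
  have h1 := one_le_add_sqrt_one_add_sq hM
  have hshear := sq_add_shear_sq_le hM a s
  have hss : a ^ 2 + s ^ 2 ≤ (M + √(1 + M ^ 2)) ^ 2 * (a ^ 2 + s ^ 2) :=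
    le_mul_of_one_le_left (by positivity) (one_le_pow₀ h1)
  rcases le_total t 0 with ht | ht
  · nlinarith
  · nlinarith

lemma norm_foldMap_sub_le {m : ℕ} {ρ : EuclideanSpace ℝ (Fin m) → ℝ} {M : ℝ} (hM : 0 ≤ M)
    (hρ : LipschitzWith M.toNNReal ρ) (x : EuclideanSpace ℝ (Fin (m + 1)))
    {y : EuclideanSpace ℝ (Fin (m + 1))} (hy : ρ (initCoord m y) < lastCoord m y) :
    ‖foldMap m ρ x - y‖ ≤ (M + √(1 + M ^ 2)) * ‖x - y‖ := by
  have h1 := one_le_add_sqrt_one_add_sq hM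
  by_cases hx : ρ (initCoord m x) < lastCoord m x
  · rw [foldMap, if_pos hx]
    exact le_mul_of_one_le_left (norm_nonneg _) h1
  rw [not_lt] at hx
  have hlip : ρ (initCoord m x) - ρ (initCoord m y) ≤ M * ‖initCoord m x - initCoord m y‖ := by
    have := hρ.dist_le_mul (initCoord m x) (initCoord m y)
    rw [Real.dist_eq, Real.coe_toNNReal M hM, dist_eq_norm] at this
    exact (abs_le.1 this).2
  have key := sq_add_sq_le_of_le_of_le_shear (a := ‖initCoord m x - initCoord m y‖)
    (s := lastCoord m x - lastCoord m y) (t := 2 * ρ (initCoord m x) - lastCoord m x - lastCoord m y)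
    hM (by linarith) (by linarith)
  refine le_of_sq_le_sq ?_ (by positivity)
  rw [mul_pow, norm_sq_eq_norm_initCoord_sq_add_lastCoord_sq,
    norm_sq_eq_norm_initCoord_sq_add_lastCoord_sq (x - y), initCoord_sub, initCoord_sub,
    lastCoord_sub, lastCoord_sub, initCoord_foldMap, lastCoord_foldMap_of_le ρ hx]
  exact key

/-- **Lipschitz estimate for the fold map.** For every `x ∈ ℝⁿ` and `y ∈ Ω`,
`|L(x) − y| ≤ (M + √(1+M²))² |x − y|`, where `M` is the Lipschitz constant of `ρ`. -/
theorem stmt2 (m : ℕ) (ρ : EuclideanSpace ℝ (Fin m) → ℝ) (M : ℝ) (hM : 0 ≤ M)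
    (hρ : LipschitzWith M.toNNReal ρ)
    (x y : EuclideanSpace ℝ (Fin (m + 1)))
    (hy : ρ (initCoord m y) < lastCoord m y) :
    ‖foldMap m ρ x - y‖ ≤ (M + Real.sqrt (1 + M ^ 2)) ^ 2 * ‖x - y‖ := by
  calc ‖foldMap m ρ x - y‖ ≤ (M + √(1 + M ^ 2)) * ‖x - y‖ := norm_foldMap_sub_le hM hρ x hy
    _ ≤ (M + √(1 + M ^ 2)) ^ 2 * ‖x - y‖ := by
      gcongr
      exact le_self_pow₀ (one_le_add_sqrt_one_add_sq hM) two_ne_zero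
end

section
/- Given a Littlewood–Paley family (φ_j)_{j≥0} associated with a special Lipschitz domain Ω (with φ₁ having all moments vanishing, φ_j = 2^{(j−1)n}φ₁(2^{j−1}·) for j ≥ 2, Σ_j φ_j = δ₀, supp φ_j ⊂ K), define ψ via Fourier transforms: ψ̂₀(ξ) = 2φ̂₀(ξ) − φ̂₀(ξ)³ and ψ̂_j(ξ) = (φ̂₀(2^{−j}ξ) + φ̂₀(2^{1−j}ξ))(2 − φ̂₀(2^{−j}ξ)² − φ̂₀(2^{1−j}ξ)²) for j ≥ 1. Then Σ_{j=0}^∞ ψ_j ∗ φ_j = δ₀ in 𝒮′(ℝⁿ), i.e. Σ_{j=0}^∞ ψ̂_j(ξ) φ̂_j(ξ) = 1 for all ξ ∈ ℝⁿ. -/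
open Filter Topology

/-- **Telescoping identity `Σ_j ψ̂_j φ̂_j = 1` for Rychkov's pair.** Let `g = φ̂₀` satisfy
`g(2^{−J}ξ) → 1` as `J → ∞`, let `φ̂_j(ξ) = g(2^{−j}ξ) − g(2^{1−j}ξ)` for `j ≥ 1`
(as forced by the scaling and `Σφ_j = δ₀`), and define `ψ̂₀ = 2g − g³`,
`ψ̂_j(ξ) = (g(2^{−j}ξ) + g(2^{1−j}ξ))(2 − g(2^{−j}ξ)² − g(2^{1−j}ξ)²)` for `j ≥ 1`.
Then `Σ_{j=0}^∞ ψ̂_j(ξ) φ̂_j(ξ) = 1` for all `ξ`, i.e. `Σ_j ψ_j ∗ φ_j = δ₀`. -/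
theorem stmt16 (n : ℕ) (g : EuclideanSpace ℝ (Fin n) → ℂ)
    (hg : ∀ ξ, Tendsto (fun J : ℕ => g ((2 : ℝ) ^ (-(J : ℝ)) • ξ)) atTop (𝓝 1))
    (φh ψh : ℕ → EuclideanSpace ℝ (Fin n) → ℂ)
    (hφ0 : φh 0 = g)
    (hφ : ∀ j : ℕ, 1 ≤ j → ∀ ξ,
      φh j ξ = g ((2 : ℝ) ^ (-(j : ℝ)) • ξ) - g ((2 : ℝ) ^ (1 - (j : ℝ)) • ξ))
    (hψ0 : ∀ ξ, ψh 0 ξ = 2 * g ξ - g ξ ^ 3)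
    (hψ : ∀ j : ℕ, 1 ≤ j → ∀ ξ,
      ψh j ξ = (g ((2 : ℝ) ^ (-(j : ℝ)) • ξ) + g ((2 : ℝ) ^ (1 - (j : ℝ)) • ξ)) *
        (2 - g ((2 : ℝ) ^ (-(j : ℝ)) • ξ) ^ 2 - g ((2 : ℝ) ^ (1 - (j : ℝ)) • ξ) ^ 2)) :
    ∀ ξ, Tendsto (fun m => ∑ j ∈ Finset.range m, ψh j ξ * φh j ξ) atTop (𝓝 1) := by
  intro ξ
  set F : ℕ → ℂ := fun J => g ((2 : ℝ) ^ (-(J : ℝ)) • ξ) with hF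
  -- partial sums telescope
  have key : ∀ m : ℕ, ∑ j ∈ Finset.range (m + 1), ψh j ξ * φh j ξ
      = 2 * F m ^ 2 - F m ^ 4 := by
    intro m
    induction m with
    | zero =>
        have hF0 : F 0 = g ξ := by
          simp only [hF, Nat.cast_zero, neg_zero, Real.rpow_zero, one_smul]
        rw [Finset.sum_range_one, hψ0 ξ, hφ0, hF0]
        ring
    | succ m ih =>
        rw [Finset.sum_range_succ, ih]
        have h1 : (1 : ℕ) ≤ m + 1 := Nat.le_add_left 1 m
        have hc : (1 : ℝ) - ((m + 1 : ℕ) : ℝ) = -(m : ℝ) := by push_cast; ring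
        rw [hψ (m + 1) h1 ξ, hφ (m + 1) h1 ξ, hc]
        simp only [hF]
        ring
  have hlim : Tendsto (fun m => 2 * F m ^ 2 - F m ^ 4) atTop
      (𝓝 ((2 : ℂ) * 1 ^ 2 - 1 ^ 4)) :=
    (tendsto_const_nhds.mul ((hg ξ).pow 2)).sub ((hg ξ).pow 4)
  norm_num at hlim
  have h1 : Tendsto (fun m => ∑ j ∈ Finset.range (m + 1), ψh j ξ * φh j ξ) atTop (𝓝 1) := by
    simpa only [key] using hlim
  exact (tendsto_add_atTop_iff_nat 1).mp h1
end
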